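/- arXiv:1512.02991 — 7 statements merged into one kernel-verified Lean document; each statement's English description precedes it below -/
import Mathlib

section
/- If n > t^m, then the set {1, t, t², ..., t^{m-1}} is a t-free set of size m in Z_n. -/
/-! With exponents below `m` and at most `t` summands, every sum of powers `t ^ i` is at most
`t ^ m < n`, so an equation in `ZMod n` between two such sums already holds in `ℕ`. There, unless
one side is empty, each exponent occurs fewer than `t` times, so both sides are base-`t`
expansions whose digits are the multiplicities, and uniqueness of base-`t` digits forces the two
multisets of exponents to agree. -/

/-- `S` is a `t`-free set in the additive abelian group `G`: whenever a sum of `k`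
elements of `S` equals a sum of `l` elements of `S` with `k + l ≤ t`, the two
multisets of terms coincide (in particular `k = l`). -/
def IsTFreeSet {G : Type*} [AddCommGroup G] (t : ℕ) (S : Set G) : Prop :=
  ∀ A B : Multiset G, (∀ x ∈ A, x ∈ S) → (∀ x ∈ B, x ∈ S) →
    Multiset.card A + Multiset.card B ≤ t → A.sum = B.sum → A = B

namespace Nat

theorem ofDigits_map_range (b N : ℕ) (f : ℕ → ℕ) :
    ofDigits b ((List.range N).map f) = ∑ i ∈ Finset.range N, f i * b ^ i := by
  induction N with
  | zero => simp
  | succ N ih =>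
    rw [List.range_succ, List.map_append, ofDigits_append, ih, Finset.sum_range_succ]
    simp [mul_comm]

end Nat

namespace Multiset

theorem sum_map_pow_eq_ofDigits_count (b N : ℕ) {A : Multiset ℕ} (hA : ∀ a ∈ A, a < N) :
    (A.map (b ^ ·)).sum = Nat.ofDigits b ((List.range N).map A.count) := by
  classical
  rw [Nat.ofDigits_map_range, Finset.sum_multiset_map_count]
  refine Finset.sum_subset (fun a ha => Finset.mem_range.2 (hA a (mem_toFinset.1 ha))) ?_
  intro a _ ha
  simp [count_eq_zero.2 (fun h => ha (mem_toFinset.2 h))]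

theorem eq_of_sum_map_pow_eq_of_count_lt {b : ℕ} (hb : 1 < b) {A B : Multiset ℕ}
    (hA : ∀ i, A.count i < b) (hB : ∀ i, B.count i < b)
    (h : (A.map (b ^ ·)).sum = (B.map (b ^ ·)).sum) : A = B := by
  set N := (A + B).sup + 1
  have hN : ∀ a ∈ A + B, a < N := fun a ha => Nat.lt_succ_of_le (le_sup ha)
  have hdigits : (List.range N).map A.count = (List.range N).map B.count := by
    refine Nat.ofDigits_inj_of_len_eq hb (by simp) ?_ ?_ ?_
    · simpa using fun i _ => hA i
    · simpa using fun i _ => hB i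
    rwa [← sum_map_pow_eq_ofDigits_count b N fun a ha => hN a (mem_add.2 (.inl ha)),
      ← sum_map_pow_eq_ofDigits_count b N fun a ha => hN a (mem_add.2 (.inr ha))]
  ext i
  by_cases hi : i < N
  · exact List.map_inj_left.1 hdigits i (List.mem_range.2 hi)
  · have hiA : i ∉ A := fun h => hi (hN i (mem_add.2 (.inl h)))
    have hiB : i ∉ B := fun h => hi (hN i (mem_add.2 (.inr h)))
    rw [count_eq_zero.2 hiA, count_eq_zero.2 hiB]

theorem eq_zero_of_sum_map_pow_eq_zero {b : ℕ} (hb : b ≠ 0) {A : Multiset ℕ}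
    (h : (A.map (b ^ ·)).sum = 0) : A = 0 :=
  eq_zero_of_forall_notMem (by simpa [sum_eq_zero_iff, hb] using h)

theorem eq_of_sum_map_pow_eq {b : ℕ} (hb : 1 < b) {A B : Multiset ℕ}
    (hcard : card A + card B ≤ b) (h : (A.map (b ^ ·)).sum = (B.map (b ^ ·)).sum) : A = B := by
  have hb0 : b ≠ 0 := by omega
  rcases eq_or_ne A 0 with rfl | hA
  · exact (eq_zero_of_sum_map_pow_eq_zero hb0 (by simpa using h.symm)).symm
  rcases eq_or_ne B 0 with rfl | hB
  · exact eq_zero_of_sum_map_pow_eq_zero hb0 (by simpa using h)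
  have hA' := card_pos.2 hA
  have hB' := card_pos.2 hB
  refine eq_of_sum_map_pow_eq_of_count_lt hb (fun i => ?_) (fun i => ?_) h
  · exact (count_le_card i A).trans_lt (by omega)
  · exact (count_le_card i B).trans_lt (by omega)

theorem sum_map_pow_le {b m : ℕ} {M : Multiset ℕ} (hM : ∀ i ∈ M, i < m) (hcard : card M ≤ b) :
    (M.map (b ^ ·)).sum ≤ b ^ m := by
  rcases b.eq_zero_or_pos with rfl | hb
  · simp [card_eq_zero.1 (Nat.le_zero.1 hcard)]
  refine Nat.le_of_mul_le_mul_left ?_ hb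
  calc b * (M.map (b ^ ·)).sum = (M.map (b * b ^ ·)).sum := sum_map_mul_left.symm
    _ ≤ card M * b ^ m := by
        rw [← smul_eq_mul, ← card_map (b * b ^ ·) M]
        refine sum_le_card_nsmul _ _ fun x hx => ?_
        obtain ⟨i, hi, rfl⟩ := mem_map.1 hx
        exact (pow_succ' b i).symm.le.trans (Nat.pow_le_pow_right hb (hM i hi))
    _ ≤ b * b ^ m := Nat.mul_le_mul_right _ hcard

theorem exists_map_eq_of_forall_mem_image {α β : Type*} [Nonempty β] (f : β → α) (s : Set β)
    {A : Multiset α} (hA : ∀ x ∈ A, x ∈ f '' s) :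
    ∃ I : Multiset β, (∀ i ∈ I, i ∈ s) ∧ I.map f = A := by
  refine ⟨A.map (Function.invFunOn f s), ?_, ?_⟩
  · simpa using fun x hx => Function.invFunOn_mem (hA x hx)
  · rw [map_map]
    exact (map_congr rfl fun x hx => Function.invFunOn_eq (hA x hx)).trans (map_id A)

end Multiset

theorem isTFreeSet_image {G β : Type*} [AddCommGroup G] [Nonempty β] {t : ℕ} (f : β → G)
    (s : Set β) (h : ∀ I J : Multiset β, (∀ i ∈ I, i ∈ s) → (∀ j ∈ J, j ∈ s) →
      Multiset.card I + Multiset.card J ≤ t → (I.map f).sum = (J.map f).sum → I = J) :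
    IsTFreeSet t (f '' s) := by
  intro A B hA hB hcard hsum
  obtain ⟨I, hI, rfl⟩ := Multiset.exists_map_eq_of_forall_mem_image f s hA
  obtain ⟨J, hJ, rfl⟩ := Multiset.exists_map_eq_of_forall_mem_image f s hB
  rw [Multiset.card_map, Multiset.card_map] at hcard
  rw [h I J hI hJ hcard hsum]

theorem ZMod.natCast_sum_map_pow (n t : ℕ) (I : Multiset ℕ) :
    (((I.map (t ^ ·)).sum : ℕ) : ZMod n) = (I.map ((t : ZMod n) ^ ·)).sum := by
  simp [Nat.cast_multiset_sum, Multiset.map_map]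

theorem ZMod.eq_of_sum_map_pow_eq {t m n : ℕ} (ht : 2 ≤ t) (hn : t ^ m < n)
    {I J : Multiset ℕ} (hI : ∀ i ∈ I, i < m) (hJ : ∀ j ∈ J, j < m)
    (hcard : Multiset.card I + Multiset.card J ≤ t)
    (h : (I.map ((t : ZMod n) ^ ·)).sum = (J.map ((t : ZMod n) ^ ·)).sum) : I = J := by
  have hIn := (Multiset.sum_map_pow_le hI (by omega)).trans_lt hn
  have hJn := (Multiset.sum_map_pow_le hJ (by omega)).trans_lt hn
  rw [← natCast_sum_map_pow, ← natCast_sum_map_pow, natCast_eq_natCast_iff',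
    Nat.mod_eq_of_lt hIn, Nat.mod_eq_of_lt hJn] at h
  exact Multiset.eq_of_sum_map_pow_eq ht hcard h

theorem powers_t_free (t m n : ℕ) (ht : 2 ≤ t) (hn : t ^ m < n) :
    IsTFreeSet t (↑((Finset.range m).image (fun i => ((t : ZMod n)) ^ i)) : Set (ZMod n)) ∧
    ((Finset.range m).image (fun i => ((t : ZMod n)) ^ i)).card = m := by
  have hfree : ∀ I J : Multiset ℕ, (∀ i ∈ I, i ∈ Set.Iio m) → (∀ j ∈ J, j ∈ Set.Iio m) →
      Multiset.card I + Multiset.card J ≤ t →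
      (I.map ((t : ZMod n) ^ ·)).sum = (J.map ((t : ZMod n) ^ ·)).sum → I = J :=
    fun I J hI hJ => ZMod.eq_of_sum_map_pow_eq ht hn hI hJ
  refine ⟨?_, ?_⟩
  · rw [Finset.coe_image, Finset.coe_range]
    exact isTFreeSet_image _ _ hfree
  · refine (Finset.card_image_of_injOn fun i hi j hj hij => ?_).trans (Finset.card_range m)
    refine Multiset.singleton_inj.1 (hfree {i} {j} ?_ ?_ (by simpa using ht) (by simpa using hij))
    · simpa using hi
    · simpa using hj
end

section
/- For every positive integer n, every 3-free set S in Z_n satisfies |S| ≤ ⌊n/4⌋. -/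
theorem three_free_upper_bound (n : ℕ) (hn : 0 < n)
    (S : Finset (ZMod n)) (hS : IsTFreeSet 3 (↑S : Set (ZMod n))) :
    S.card ≤ n / 4 := by
  classical
  rcases S.eq_empty_or_nonempty with rfl | ⟨s, hs⟩
  · simp
  haveI : NeZero n := ⟨hn.ne'⟩
  have L2 : ∀ a ∈ S, ∀ b ∈ S, a + b ≠ 0 := by
    intro a ha b hb h
    have := hS {a, b} 0
      (by intro x hx; simp only [Multiset.insert_eq_cons, Multiset.mem_cons, Multiset.mem_singleton] at hx
          rcases hx with rfl | rfl <;> [exact ha; exact hb])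
      (by simp) (by simp) (by simpa using h)
    simp at this
  have L21 : ∀ a ∈ S, ∀ b ∈ S, ∀ c ∈ S, a + b ≠ c := by
    intro a ha b hb c hc h
    have := hS {a, b} {c}
      (by intro x hx; simp only [Multiset.insert_eq_cons, Multiset.mem_cons, Multiset.mem_singleton] at hx
          rcases hx with rfl | rfl <;> [exact ha; exact hb])
      (by intro x hx; simp only [Multiset.mem_singleton] at hx; subst hx; exact hc)
      (by simp) (by simpa using h)
    have := congrArg Multiset.card this
    simp at this
  have L3 : ∀ a ∈ S, ∀ b ∈ S, ∀ c ∈ S, a + b + c ≠ 0 := by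
    intro a ha b hb c hc h
    have := hS {a, b, c} 0
      (by intro x hx
          simp only [Multiset.insert_eq_cons, Multiset.mem_cons, Multiset.mem_singleton] at hx
          rcases hx with rfl | rfl | rfl <;> [exact ha; exact hb; exact hc])
      (by simp) (by simp) (by simpa [add_assoc] using h)
    simp at this
  set T2 := S.image (fun a => s + a) with hT2
  set T3 := S.image (fun a => -a) with hT3
  set T4 := S.image (fun a => s - a) with hT4
  have c2 : T2.card = S.card := Finset.card_image_of_injective _ (add_right_injective s)
  have c3 : T3.card = S.card := Finset.card_image_of_injective _ neg_injective
  have c4 : T4.card = S.card := Finset.card_image_of_injective _ (sub_right_injective)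
  have d12 : Disjoint S T2 := by
    rw [Finset.disjoint_left]
    rintro x hx hx2
    rw [hT2, Finset.mem_image] at hx2
    obtain ⟨b, hb, rfl⟩ := hx2
    exact L21 s hs b hb _ hx rfl
  have d13 : Disjoint S T3 := by
    rw [Finset.disjoint_left]
    rintro x hx hx3
    rw [hT3, Finset.mem_image] at hx3
    obtain ⟨b, hb, rfl⟩ := hx3
    exact L2 b hb _ hx (by ring)
  have d14 : Disjoint S T4 := by
    rw [Finset.disjoint_left]
    rintro x hx hx4
    rw [hT4, Finset.mem_image] at hx4
    obtain ⟨b, hb, rfl⟩ := hx4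
    exact L21 _ hx b hb s hs (by ring)
  have d23 : Disjoint T2 T3 := by
    rw [Finset.disjoint_left]
    rintro x hx2 hx3
    rw [hT2, Finset.mem_image] at hx2
    rw [hT3, Finset.mem_image] at hx3
    obtain ⟨a, ha, rfl⟩ := hx2
    obtain ⟨b, hb, hba⟩ := hx3
    exact L3 s hs a ha b hb (by rw [← hba]; ring)
  have d24 : Disjoint T2 T4 := by
    rw [Finset.disjoint_left]
    rintro x hx2 hx4
    rw [hT2, Finset.mem_image] at hx2
    rw [hT4, Finset.mem_image] at hx4
    obtain ⟨a, ha, rfl⟩ := hx2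
    obtain ⟨b, hb, hba⟩ := hx4
    have : a + b = 0 := by
      have : s + a = s - b := hba.symm
      linear_combination this
    exact L2 a ha b hb this
  have d34 : Disjoint T3 T4 := by
    rw [Finset.disjoint_left]
    rintro x hx3 hx4
    rw [hT3, Finset.mem_image] at hx3
    rw [hT4, Finset.mem_image] at hx4
    obtain ⟨a, ha, rfl⟩ := hx3
    obtain ⟨b, hb, hba⟩ := hx4
    have : s + a = b := by linear_combination hba
    exact L21 s hs a ha b hb this
  have hcardU : (S ∪ T2 ∪ T3 ∪ T4).card = 4 * S.card := by
    rw [Finset.card_union_of_disjoint, Finset.card_union_of_disjoint,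
      Finset.card_union_of_disjoint d12, c2, c3, c4]
    · ring
    · exact Finset.disjoint_union_left.mpr ⟨d13, d23⟩
    · exact Finset.disjoint_union_left.mpr ⟨Finset.disjoint_union_left.mpr ⟨d14, d24⟩, d34⟩
  have hle : 4 * S.card ≤ n := by
    rw [← hcardU]
    calc (S ∪ T2 ∪ T3 ∪ T4).card ≤ Fintype.card (ZMod n) := Finset.card_le_univ _
    _ = n := ZMod.card n
  omega
end

section
/- If n is an even positive integer, then the set of odd integers strictly between 0 and n/2 is a 3-free set in Z_n of size ⌊n/4⌋; hence s(Z_n, 3) = ⌊n/4⌋ for even n. -/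
lemma key3 {G : Type*} [AddCommGroup G] (S : Set G)
    (h1 : ∀ x ∈ S, x ≠ 0)
    (h2 : ∀ x ∈ S, ∀ y ∈ S, x + y ≠ 0)
    (h3 : ∀ x ∈ S, ∀ y ∈ S, ∀ z ∈ S, x + y + z ≠ 0)
    (h4 : ∀ x ∈ S, ∀ y ∈ S, ∀ z ∈ S, x ≠ y + z)
    (A B : Multiset G) (hA : ∀ x ∈ A, x ∈ S) (hB : ∀ x ∈ B, x ∈ S)
    (hle : Multiset.card A ≤ Multiset.card B)
    (hcard : Multiset.card A + Multiset.card B ≤ 3)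
    (hsum : A.sum = B.sum) : A = B := by
  rcases (show Multiset.card A = 0 ∨ Multiset.card A = 1 by omega) with h0 | h0
  · obtain rfl : A = 0 := Multiset.card_eq_zero.mp h0
    rcases (show Multiset.card B = 0 ∨ Multiset.card B = 1 ∨ Multiset.card B = 2 ∨
        Multiset.card B = 3 by omega) with hb | hb | hb | hb
    · exact (Multiset.card_eq_zero.mp hb).symm
    · obtain ⟨x, rfl⟩ := Multiset.card_eq_one.mp hb
      simp only [Multiset.sum_zero, Multiset.sum_singleton] at hsum
      exact absurd hsum.symm (h1 x (hB x (by simp)))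
    · obtain ⟨x, y, rfl⟩ := Multiset.card_eq_two.mp hb
      simp only [Multiset.sum_zero, Multiset.insert_eq_cons, Multiset.sum_cons,
        Multiset.sum_singleton] at hsum
      exact absurd hsum.symm (h2 x (hB x (by simp)) y (hB y (by simp)))
    · obtain ⟨x, y, z, rfl⟩ := Multiset.card_eq_three.mp hb
      simp only [Multiset.sum_zero, Multiset.insert_eq_cons, Multiset.sum_cons,
        Multiset.sum_singleton] at hsum
      refine absurd ?_ (h3 x (hB x (by simp)) y (hB y (by simp)) z (hB z (by simp)))
      rw [add_assoc]; exact hsum.symm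
  · obtain ⟨x, rfl⟩ := Multiset.card_eq_one.mp h0
    rcases (show Multiset.card B = 1 ∨ Multiset.card B = 2 by omega) with hb | hb
    · obtain ⟨y, rfl⟩ := Multiset.card_eq_one.mp hb
      simp only [Multiset.sum_singleton] at hsum
      rw [hsum]
    · obtain ⟨y, z, rfl⟩ := Multiset.card_eq_two.mp hb
      simp only [Multiset.insert_eq_cons, Multiset.sum_cons, Multiset.sum_singleton] at hsum
      exact absurd hsum (h4 x (hA x (by simp)) y (hB y (by simp)) z (hB z (by simp)))

lemma isTFree3 {G : Type*} [AddCommGroup G] (S : Set G)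
    (h1 : ∀ x ∈ S, x ≠ 0)
    (h2 : ∀ x ∈ S, ∀ y ∈ S, x + y ≠ 0)
    (h3 : ∀ x ∈ S, ∀ y ∈ S, ∀ z ∈ S, x + y + z ≠ 0)
    (h4 : ∀ x ∈ S, ∀ y ∈ S, ∀ z ∈ S, x ≠ y + z) :
    IsTFreeSet 3 S := by
  intro A B hA hB hcard hsum
  rcases le_total (Multiset.card A) (Multiset.card B) with hle | hle
  · exact key3 S h1 h2 h3 h4 A B hA hB hle hcard hsum
  · exact (key3 S h1 h2 h3 h4 B A hB hA hle (by omega) hsum.symm).symm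

lemma card_odd_filter (m : ℕ) :
    ((Finset.range m).filter (fun k => k % 2 = 1)).card = m / 2 := by
  induction m with
  | zero => simp
  | succ m ih =>
    rw [Finset.range_add_one, Finset.filter_insert]
    by_cases h : m % 2 = 1
    · rw [if_pos h, Finset.card_insert_of_notMem (by simp), ih]; omega
    · rw [if_neg h, ih]; omega

theorem three_free_even (n : ℕ) (hn : 0 < n) (heven : Even n) :
    IsTFreeSet 3
      (↑(((Finset.range (n / 2)).filter (fun k => k % 2 = 1)).image (fun (k : ℕ) => (k : ZMod n))) :
        Set (ZMod n)) ∧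
    (((Finset.range (n / 2)).filter (fun k => k % 2 = 1)).image (fun (k : ℕ) => (k : ZMod n))).card
      = n / 4 ∧
    (∀ S : Finset (ZMod n), IsTFreeSet 3 (↑S : Set (ZMod n)) → S.card ≤ n / 4) := by
  haveI : NeZero n := ⟨hn.ne'⟩
  have h2n : n / 2 * 2 = n := Nat.div_mul_cancel heven.two_dvd
  have hmem : ∀ x : ZMod n,
      x ∈ (↑(((Finset.range (n / 2)).filter (fun k => k % 2 = 1)).image
        (fun (k : ℕ) => (k : ZMod n))) : Set (ZMod n)) →
      ∃ j : ℕ, j < n / 2 ∧ j % 2 = 1 ∧ (j : ZMod n) = x := by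
    intro x hx
    simp only [Finset.coe_image, Set.mem_image, Finset.mem_coe, Finset.mem_filter,
      Finset.mem_range] at hx
    obtain ⟨j, ⟨hj1, hj2⟩, hj3⟩ := hx
    exact ⟨j, hj1, hj2, hj3⟩
  refine ⟨?_, ?_, ?_⟩
  · apply isTFree3
    · intro x hx h0
      obtain ⟨j, hj1, hj2, rfl⟩ := hmem x hx
      have : n ∣ j := (ZMod.natCast_eq_zero_iff j n).mp h0
      have := Nat.eq_zero_of_dvd_of_lt this (by omega)
      omega
    · intro x hx y hy h0
      obtain ⟨j, hj1, hj2, rfl⟩ := hmem x hx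
      obtain ⟨k, hk1, hk2, rfl⟩ := hmem y hy
      rw [← Nat.cast_add] at h0
      have : n ∣ j + k := (ZMod.natCast_eq_zero_iff _ n).mp h0
      have := Nat.eq_zero_of_dvd_of_lt this (by omega)
      omega
    · intro x hx y hy z hz h0
      obtain ⟨j, hj1, hj2, rfl⟩ := hmem x hx
      obtain ⟨k, hk1, hk2, rfl⟩ := hmem y hy
      obtain ⟨l, hl1, hl2, rfl⟩ := hmem z hz
      rw [← Nat.cast_add, ← Nat.cast_add] at h0
      have hd : n ∣ j + k + l := (ZMod.natCast_eq_zero_iff _ n).mp h0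
      have h2 : (2 : ℕ) ∣ j + k + l := dvd_trans heven.two_dvd hd
      omega
    · intro x hx y hy z hz h0
      obtain ⟨j, hj1, hj2, rfl⟩ := hmem x hx
      obtain ⟨k, hk1, hk2, rfl⟩ := hmem y hy
      obtain ⟨l, hl1, hl2, rfl⟩ := hmem z hz
      rw [← Nat.cast_add] at h0
      have hmod : j % n = (k + l) % n := (ZMod.natCast_eq_natCast_iff' _ _ _).mp h0
      rw [Nat.mod_eq_of_lt (by omega), Nat.mod_eq_of_lt (by omega)] at hmod
      omega
  · rw [Finset.card_image_of_injOn, card_odd_filter]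
    · omega
    · intro a ha b hb hab
      simp only [Finset.coe_filter, Finset.mem_range, Set.mem_setOf_eq] at ha hb
      have := (ZMod.natCast_eq_natCast_iff' a b n).mp hab
      rw [Nat.mod_eq_of_lt (by omega), Nat.mod_eq_of_lt (by omega)] at this
      exact this
  · intro S hS
    rcases Finset.eq_empty_or_nonempty S with rfl | ⟨a, ha⟩
    · simp
    -- derived facts
    have ne0 : ∀ x ∈ S, x ≠ (0 : ZMod n) := by
      intro x hx h0
      have := hS {x} 0 (by simpa using hx) (by simp) (by simp) (by simpa using h0)
      simp at this
    have nsum2 : ∀ x ∈ S, ∀ y ∈ S, x + y ≠ (0 : ZMod n) := by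
      intro x hx y hy h0
      have := hS {x, y} 0 (by intro w hw; simp at hw; rcases hw with rfl | rfl <;> simpa)
        (by simp) (by simp) (by simpa using h0)
      simp at this
    have nsum3 : ∀ x ∈ S, ∀ y ∈ S, ∀ z ∈ S, x + y + z ≠ (0 : ZMod n) := by
      intro x hx y hy z hz h0
      have := hS {x, y, z} 0
        (by intro w hw; simp at hw; rcases hw with rfl | rfl | rfl <;> simpa)
        (by simp) (by simp) (by simp [← add_assoc]; simpa using h0)
      simp at this
    have neq : ∀ x ∈ S, ∀ y ∈ S, ∀ z ∈ S, x ≠ y + z := by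
      intro x hx y hy z hz h0
      have := hS {x} {y, z} (by simpa using hx)
        (by intro w hw; simp at hw; rcases hw with rfl | rfl <;> simpa)
        (by simp) (by simpa using h0)
      have := congrArg Multiset.card this
      simp at this
    set f1 := S.image (fun x => -x) with hf1
    set f2 := S.image (fun x => a + x) with hf2
    set f3 := S.image (fun x => a - x) with hf3
    have c1 : f1.card = S.card := Finset.card_image_of_injective _ neg_injective
    have c2 : f2.card = S.card := Finset.card_image_of_injective _ (add_right_injective a)
    have c3 : f3.card = S.card := Finset.card_image_of_injective _ (sub_right_injective)
    have d01 : Disjoint S f1 := by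
      rw [Finset.disjoint_left]
      intro x hx hx1
      obtain ⟨y, hy, hyx⟩ := Finset.mem_image.mp hx1
      exact nsum2 x hx y hy (by rw [← hyx]; ring)
    have d02 : Disjoint S f2 := by
      rw [Finset.disjoint_left]
      intro x hx hx2
      obtain ⟨y, hy, hyx⟩ := Finset.mem_image.mp hx2
      exact neq x hx a ha y hy hyx.symm
    have d03 : Disjoint S f3 := by
      rw [Finset.disjoint_left]
      intro x hx hx3
      obtain ⟨y, hy, hyx⟩ := Finset.mem_image.mp hx3
      exact neq a ha x hx y hy (by rw [← hyx]; ring)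
    have d12 : Disjoint f1 f2 := by
      rw [Finset.disjoint_left]
      intro w hw1 hw2
      obtain ⟨x, hx, hxw⟩ := Finset.mem_image.mp hw1
      obtain ⟨y, hy, hyw⟩ := Finset.mem_image.mp hw2
      have h : a + y = -x := hyw.trans hxw.symm
      exact nsum3 a ha y hy x hx (by linear_combination h)
    have d13 : Disjoint f1 f3 := by
      rw [Finset.disjoint_left]
      intro w hw1 hw3
      obtain ⟨x, hx, hxw⟩ := Finset.mem_image.mp hw1
      obtain ⟨y, hy, hyw⟩ := Finset.mem_image.mp hw3
      have h : a - y = -x := hyw.trans hxw.symm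
      exact neq y hy a ha x hx (by linear_combination -h)
    have d23 : Disjoint f2 f3 := by
      rw [Finset.disjoint_left]
      intro w hw2 hw3
      obtain ⟨x, hx, hxw⟩ := Finset.mem_image.mp hw2
      obtain ⟨y, hy, hyw⟩ := Finset.mem_image.mp hw3
      have h : a + x = a - y := hxw.trans hyw.symm
      exact nsum2 x hx y hy (by linear_combination h)
    have hcard : (S ∪ f1 ∪ f2 ∪ f3).card = 4 * S.card := by
      rw [Finset.card_union_of_disjoint, Finset.card_union_of_disjoint,
        Finset.card_union_of_disjoint d01, c1, c2, c3]
      · ring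
      · simp [Finset.disjoint_union_left, d02, d12]
      · simp [Finset.disjoint_union_left, d03, d13, d23]
    have hle : (S ∪ f1 ∪ f2 ∪ f3).card ≤ n := by
      have := Finset.card_le_univ (S ∪ f1 ∪ f2 ∪ f3)
      rwa [Fintype.card_eq_nat_card, Nat.card_zmod] at this
    omega
end

section
/- Let p = 6q + 5 be a prime divisor of n (with q ≥ 0). Then the set {ip + 2j + 1 : 0 ≤ i ≤ n/p − 1, 0 ≤ j ≤ q} is a 3-free set in Z_n of size (p+1)n/(6p); hence s(Z_n, 3) ≥ (p+1)n/(6p). -/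
theorem three_free_prime_divisor (n p q : ℕ) (hn : 0 < n) (hp : p.Prime)
    (hpq : p = 6 * q + 5) (hdvd : p ∣ n) :
    IsTFreeSet 3
      (↑((Finset.range (n / p) ×ˢ Finset.range (q + 1)).image
          (fun ij => ((ij.1 * p + 2 * ij.2 + 1 : ℕ) : ZMod n))) : Set (ZMod n)) ∧
    ((Finset.range (n / p) ×ˢ Finset.range (q + 1)).image
        (fun ij => ((ij.1 * p + 2 * ij.2 + 1 : ℕ) : ZMod n))).card = (p + 1) * n / (6 * p) := by
  haveI : NeZero n := ⟨hn.ne'⟩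
  haveI : NeZero p := ⟨by omega⟩
  set S : Set (ZMod n) :=
    (↑((Finset.range (n / p) ×ˢ Finset.range (q + 1)).image
        (fun ij => ((ij.1 * p + 2 * ij.2 + 1 : ℕ) : ZMod n))) : Set (ZMod n)) with hS
  set f : ZMod n →+* ZMod p := ZMod.castHom hdvd (ZMod p) with hf
  -- every element of S maps to 2j+1 mod p for some j ≤ q
  have key : ∀ x ∈ S, ∃ j ≤ q, f x = ((2 * j + 1 : ℕ) : ZMod p) := by
    intro x hx
    simp only [hS, Finset.coe_image, Set.mem_image, Finset.mem_coe,
      Finset.mem_product, Finset.mem_range] at hx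
    obtain ⟨⟨i, j⟩, ⟨hi, hj⟩, rfl⟩ := hx
    refine ⟨j, by omega, ?_⟩
    rw [hf, map_natCast]
    push_cast
    rw [ZMod.natCast_self]
    ring
  have natne : ∀ m : ℕ, 0 < m → m < p → ((m : ℕ) : ZMod p) ≠ 0 := by
    intro m h1 h2 h
    rw [ZMod.natCast_eq_zero_iff] at h
    exact absurd (Nat.le_of_dvd h1 h) (by omega)
  have fact1 : ∀ x ∈ S, x ≠ 0 := by
    intro x hx h
    obtain ⟨j, hj, hfx⟩ := key x hx
    rw [h, map_zero] at hfx
    exact natne (2 * j + 1) (by omega) (by omega) hfx.symm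
  have fact2 : ∀ x ∈ S, ∀ y ∈ S, x + y ≠ 0 := by
    intro x hx y hy h
    obtain ⟨j, hj, hfx⟩ := key x hx
    obtain ⟨k, hk, hfy⟩ := key y hy
    have : f (x + y) = ((2 * j + 1 + (2 * k + 1) : ℕ) : ZMod p) := by
      rw [map_add, hfx, hfy]; push_cast; ring
    rw [h, map_zero] at this
    exact natne _ (by omega) (by omega) this.symm
  have fact3 : ∀ x ∈ S, ∀ y ∈ S, ∀ z ∈ S, x + y + z ≠ 0 := by
    intro x hx y hy z hz h
    obtain ⟨j, hj, hfx⟩ := key x hx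
    obtain ⟨k, hk, hfy⟩ := key y hy
    obtain ⟨l, hl, hfz⟩ := key z hz
    have : f (x + y + z) = ((2 * j + 1 + (2 * k + 1) + (2 * l + 1) : ℕ) : ZMod p) := by
      rw [map_add, map_add, hfx, hfy, hfz]; push_cast; ring
    rw [h, map_zero] at this
    exact natne _ (by omega) (by omega) this.symm
  have fact4 : ∀ x ∈ S, ∀ y ∈ S, ∀ z ∈ S, x + y ≠ z := by
    intro x hx y hy z hz h
    obtain ⟨j, hj, hfx⟩ := key x hx
    obtain ⟨k, hk, hfy⟩ := key y hy
    obtain ⟨l, hl, hfz⟩ := key z hz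
    have h' := congrArg f h
    rw [map_add, hfx, hfy, hfz, ← Nat.cast_add] at h'
    rw [ZMod.natCast_eq_natCast_iff] at h'
    have hmm : (2 * j + 1 + (2 * k + 1)) % p = (2 * l + 1) % p := h'
    rw [Nat.mod_eq_of_lt (by omega), Nat.mod_eq_of_lt (by omega)] at hmm
    omega
  constructor
  · intro A B hA hB hcard hsum
    have hca : Multiset.card A = 0 ∨ Multiset.card A = 1 ∨ Multiset.card A = 2 ∨
        Multiset.card A = 3 := by omega
    have hcb : Multiset.card B = 0 ∨ Multiset.card B = 1 ∨ Multiset.card B = 2 ∨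
        Multiset.card B = 3 := by omega
    rcases hca with ha | ha | ha | ha <;> rcases hcb with hb | hb | hb | hb <;>
      try (exfalso; omega)
    · -- 0,0
      rw [Multiset.card_eq_zero] at ha hb; rw [ha, hb]
    · -- 0,1
      rw [Multiset.card_eq_zero] at ha
      obtain ⟨b, rfl⟩ := Multiset.card_eq_one.mp hb
      subst ha; simp at hsum
      exact absurd hsum.symm (fact1 b (hB b (by simp)))
    · -- 0,2
      rw [Multiset.card_eq_zero] at ha
      obtain ⟨b, c, rfl⟩ := Multiset.card_eq_two.mp hb
      subst ha; simp at hsum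
      exact absurd hsum.symm (fact2 b (hB b (by simp)) c (hB c (by simp)))
    · -- 0,3
      rw [Multiset.card_eq_zero] at ha
      obtain ⟨b, c, d, rfl⟩ := Multiset.card_eq_three.mp hb
      subst ha; simp [← add_assoc] at hsum
      exact absurd hsum.symm (fact3 b (hB b (by simp)) c (hB c (by simp)) d (hB d (by simp)))
    · -- 1,0
      rw [Multiset.card_eq_zero] at hb
      obtain ⟨a, rfl⟩ := Multiset.card_eq_one.mp ha
      subst hb; simp at hsum
      exact absurd hsum (fact1 a (hA a (by simp)))
    · -- 1,1
      obtain ⟨a, rfl⟩ := Multiset.card_eq_one.mp ha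
      obtain ⟨b, rfl⟩ := Multiset.card_eq_one.mp hb
      simp at hsum; rw [hsum]
    · -- 1,2
      obtain ⟨a, rfl⟩ := Multiset.card_eq_one.mp ha
      obtain ⟨b, c, rfl⟩ := Multiset.card_eq_two.mp hb
      simp at hsum
      exact absurd hsum.symm (fact4 b (hB b (by simp)) c (hB c (by simp)) a (hA a (by simp)))
    · -- 2,0
      rw [Multiset.card_eq_zero] at hb
      obtain ⟨a, b, rfl⟩ := Multiset.card_eq_two.mp ha
      subst hb; simp at hsum
      exact absurd hsum (fact2 a (hA a (by simp)) b (hA b (by simp)))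
    · -- 2,1
      obtain ⟨a, b, rfl⟩ := Multiset.card_eq_two.mp ha
      obtain ⟨c, rfl⟩ := Multiset.card_eq_one.mp hb
      simp at hsum
      exact absurd hsum (fact4 a (hA a (by simp)) b (hA b (by simp)) c (hB c (by simp)))
    · -- 3,0
      rw [Multiset.card_eq_zero] at hb
      obtain ⟨a, b, c, rfl⟩ := Multiset.card_eq_three.mp ha
      subst hb; simp [← add_assoc] at hsum
      exact absurd hsum (fact3 a (hA a (by simp)) b (hA b (by simp)) c (hA c (by simp)))
  · -- cardinality
    have hnp : n / p * p = n := Nat.div_mul_cancel hdvd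
    have hinj : Set.InjOn (fun ij : ℕ × ℕ => ((ij.1 * p + 2 * ij.2 + 1 : ℕ) : ZMod n))
        ↑(Finset.range (n / p) ×ˢ Finset.range (q + 1)) := by
      rintro ⟨i, j⟩ hij ⟨k, l⟩ hkl h
      simp only [Finset.coe_product, Set.mem_prod, Finset.mem_coe, Finset.mem_range] at hij hkl
      simp only at h
      have hbound : ∀ a b : ℕ, a < n / p → b < q + 1 → a * p + 2 * b + 1 < n := by
        intro a b ha hb
        have h1 : (a + 1) * p ≤ n / p * p := Nat.mul_le_mul_right p ha
        rw [hnp] at h1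
        have h2 : (a + 1) * p = a * p + p := by ring
        omega
      have h1 : i * p + 2 * j + 1 < n := hbound i j hij.1 hij.2
      have h2 : k * p + 2 * l + 1 < n := hbound k l hkl.1 hkl.2
      have heq : i * p + 2 * j + 1 = k * p + 2 * l + 1 := by
        have := congrArg ZMod.val h
        rwa [ZMod.val_natCast_of_lt h1, ZMod.val_natCast_of_lt h2] at this
      rw [mul_comm i p, mul_comm k p] at heq
      have e1 : (p * i + (2 * j + 1)) % p = (2 * j + 1) % p := Nat.mul_add_mod p i _
      have e2 : (p * k + (2 * l + 1)) % p = (2 * l + 1) % p := Nat.mul_add_mod p k _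
      have hmod : (2 * j + 1) % p = (2 * l + 1) % p := by
        rw [← e1, ← e2, show p * i + (2 * j + 1) = p * k + (2 * l + 1) by omega]
      rw [Nat.mod_eq_of_lt (by omega), Nat.mod_eq_of_lt (by omega)] at hmod
      have hjl : j = l := by omega
      have hik : i = k := by
        have hpk : p * i = p * k := by omega
        exact Nat.eq_of_mul_eq_mul_left (by omega) hpk
      simp [hik, hjl]
    rw [Finset.card_image_of_injOn hinj, Finset.card_product, Finset.card_range,
      Finset.card_range]
    subst hpq
    have e1 : (6 * q + 5 + 1) * n / (6 * (6 * q + 5)) = ((q + 1) * n) / (6 * q + 5) := by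
      rw [show (6 * q + 5 + 1) * n = 6 * ((q + 1) * n) by ring]
      exact Nat.mul_div_mul_left _ _ (by norm_num)
    rw [e1, Nat.mul_div_assoc _ hdvd, mul_comm]
end

section
/- Let t, m, n be positive integers with n ≥ t·3^t·m^t. Then Z_n contains a t-free set of size m. -/
namespace TFreeAux
variable {n : ℕ}

def sgn (o : Option (ZMod n × Bool)) : ZMod n :=
  match o with
  | none => 0
  | some (y, true) => y
  | some (y, false) => -y

def vsum (r : ℕ) (f : Fin r → Option (ZMod n × Bool)) : ZMod n := ∑ j, sgn (f j)

lemma vsum_cons (r : ℕ) (o : Option (ZMod n × Bool)) (f : Fin r → Option (ZMod n × Bool)) :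
    vsum (r+1) (Fin.cons o f) = sgn o + vsum r f := by
  simp [vsum, Fin.sum_univ_succ]

lemma encode (r : ℕ) (A B : Multiset (ZMod n))
    (h : Multiset.card A + Multiset.card B ≤ r) :
    ∃ f : Fin r → Option (ZMod n × Bool),
      (∀ j p, f j = some p → p.1 ∈ A ∨ p.1 ∈ B) ∧
      vsum r f = B.sum - A.sum := by
  induction r generalizing A B with
  | zero =>
    have hA : A = 0 := by rw [← Multiset.card_eq_zero]; omega
    have hB : B = 0 := by rw [← Multiset.card_eq_zero]; omega
    subst hA; subst hB
    exact ⟨fun j => none, by simp, by simp [vsum]⟩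
  | succ r ih =>
    rcases Multiset.empty_or_exists_mem B with hB | ⟨y, hy⟩
    · subst hB
      rcases Multiset.empty_or_exists_mem A with hA | ⟨y, hy⟩
      · subst hA
        exact ⟨fun j => none, by simp, by simp [vsum, sgn]⟩
      · obtain ⟨A', rfl⟩ := Multiset.exists_cons_of_mem hy
        obtain ⟨f', hmem, hv⟩ := ih A' 0 (by simp at h ⊢; omega)
        refine ⟨Fin.cons (some (y, false)) f', ?_, ?_⟩
        · intro j
          refine Fin.cases ?_ ?_ j
          · intro p hp
            simp at hp
            subst hp
            exact Or.inl (Multiset.mem_cons_self y A')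
          · intro i p hp
            simp at hp
            rcases hmem i p hp with h1 | h1
            · exact Or.inl (Multiset.mem_cons_of_mem h1)
            · exact Or.inr h1
        · rw [vsum_cons, hv]
          simp [sgn, Multiset.sum_cons]
          abel
    · obtain ⟨B', rfl⟩ := Multiset.exists_cons_of_mem hy
      obtain ⟨f', hmem, hv⟩ := ih A B' (by simp at h ⊢; omega)
      refine ⟨Fin.cons (some (y, true)) f', ?_, ?_⟩
      · intro j
        refine Fin.cases ?_ ?_ j
        · intro p hp
          simp at hp
          subst hp
          exact Or.inr (Multiset.mem_cons_self y B')
        · intro i p hp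
          simp at hp
          rcases hmem i p hp with h1 | h1
          · exact Or.inl h1
          · exact Or.inr (Multiset.mem_cons_of_mem h1)
      · rw [vsum_cons, hv]
        simp [sgn, Multiset.sum_cons]
        abel


lemma sol {n : ℕ} [NeZero n] (c : ℕ) (hc : 0 < c) (x v : ZMod n)
    (h : c • x = v) :
    c * x.val / n < c ∧ (((v.val + n * (c * x.val / n)) / c : ℕ) : ZMod n) = x := by
  have hn : 0 < n := Nat.pos_of_ne_zero (NeZero.ne n)
  have hxcast : ((x.val : ℕ) : ZMod n) = x := ZMod.natCast_rightInverse x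
  have hcast : ((c * x.val : ℕ) : ZMod n) = v := by
    push_cast
    rw [hxcast, ← h, nsmul_eq_mul]
  have hmod : c * x.val % n = v.val := by rw [← hcast, ZMod.val_natCast]
  have hdm : n * (c * x.val / n) + c * x.val % n = c * x.val := Nat.div_add_mod _ _
  have heq : v.val + n * (c * x.val / n) = c * x.val := by omega
  have hlt : c * x.val < c * n := by
    have := ZMod.val_lt x
    exact (Nat.mul_lt_mul_left hc).mpr this
  constructor
  · rw [Nat.div_lt_iff_lt_mul hn]
    omega
  · rw [heq, Nat.mul_div_cancel_left _ hc, hxcast]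

lemma pow_aux (t : ℕ) (ht : 1 ≤ t) : t * 2 ^ (t - 1) + 2 ≤ 3 ^ t := by
  induction t with
  | zero => omega
  | succ k ih =>
    rcases Nat.eq_zero_or_pos k with rfl | hk
    · norm_num
    · have ihk := ih hk
      obtain ⟨j, rfl⟩ : ∃ j, k = j + 1 := ⟨k - 1, by omega⟩
      simp only [Nat.add_sub_cancel] at ihk ⊢
      have h2 : 2 ^ j ≤ 3 ^ j := Nat.pow_le_pow_left (by norm_num) j
      rw [pow_succ, pow_succ, pow_succ]
      rw [pow_succ] at ihk
      have h3 : (j + 1 + 1) * (2 ^ j * 2) = 2 * ((j+1) * 2 ^ j) + 2 * 2 ^ j := by ring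
      omega

lemma arith (t m s n : ℕ) (ht : 1 ≤ t) (hm : 1 ≤ m) (hs : s < m)
    (h : t * 3 ^ t * m ^ t ≤ n) : s + t * ((2 * s + 1) ^ (t - 1) * t) < n := by
  rcases Nat.lt_or_ge t 2 with h1 | h2
  · -- t = 1
    obtain rfl : t = 1 := by omega
    simp only [show (1:ℕ)-1 = 0 from rfl, pow_zero, pow_one, mul_one, one_mul] at *
    omega
  · have hp := pow_aux t ht
    set K := t * m ^ (t - 1) with hK
    have hsK : s < 2 * K := by
      have h1 : m ≤ m ^ (t - 1) := Nat.le_self_pow (by omega) m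
      have : m ^ (t-1) ≤ K := by
        rw [hK]; exact Nat.le_mul_of_pos_left _ (by omega)
      omega
    have hX : t * ((2 * s + 1) ^ (t - 1) * t) + 2 * K ≤ 3 ^ t * K := by
      have e1 : (2 * s + 1) ^ (t - 1) ≤ (2 * m) ^ (t - 1) :=
        Nat.pow_le_pow_left (by omega) _
      have e2 : t * ((2 * s + 1) ^ (t - 1) * t) ≤ (t * 2 ^ (t-1)) * K := by
        rw [hK]
        calc t * ((2 * s + 1) ^ (t - 1) * t) ≤ t * ((2 * m) ^ (t - 1) * t) := by
              exact Nat.mul_le_mul_left _ (Nat.mul_le_mul_right _ e1)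
          _ = (t * 2 ^ (t-1)) * (t * m ^ (t-1)) := by rw [mul_pow]; ring
      calc t * ((2 * s + 1) ^ (t - 1) * t) + 2 * K
          ≤ (t * 2 ^ (t-1)) * K + 2 * K := by omega
        _ = (t * 2 ^ (t-1) + 2) * K := by ring
        _ ≤ 3 ^ t * K := Nat.mul_le_mul_right _ hp
    have hfin : 3 ^ t * K ≤ n := by
      have : 3 ^ t * K = t * 3 ^ t * m ^ (t-1) := by rw [hK]; ring
      have h3 : m ^ (t - 1) ≤ m ^ t := Nat.pow_le_pow_right hm (by omega)
      calc 3 ^ t * K = t * 3 ^ t * m ^ (t-1) := this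
        _ ≤ t * 3 ^ t * m ^ t := Nat.mul_le_mul_left _ h3
        _ ≤ n := h
    omega

lemma step {t n : ℕ} [NeZero n] (ht : 0 < t) (S : Finset (ZMod n))
    (hS : IsTFreeSet t (↑S : Set (ZMod n)))
    (hcard : S.card + t * ((2 * S.card + 1) ^ (t - 1) * t) < n) :
    ∃ x, x ∉ S ∧ IsTFreeSet t (↑(insert x S) : Set (ZMod n)) := by
  classical
  set O : Finset (Option (ZMod n × Bool)) :=
    insert none ((S ×ˢ (Finset.univ : Finset Bool)).image some) with hO
  have hOcard : O.card ≤ 2 * S.card + 1 := by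
    calc O.card ≤ ((S ×ˢ (Finset.univ : Finset Bool)).image some).card + 1 :=
          Finset.card_insert_le _ _
      _ ≤ (S ×ˢ (Finset.univ : Finset Bool)).card + 1 := by
          gcongr
          exact Finset.card_image_le
      _ = 2 * S.card + 1 := by
          rw [Finset.card_product, Finset.card_univ]
          simp [Fintype.card_bool]
          ring
  set F : ℕ × ((Fin (t-1) → Option (ZMod n × Bool)) × ℕ) → ZMod n :=
    fun p => (((vsum (t-1) p.2.1).val + n * p.2.2) / p.1 : ℕ) with hF
  set T : Finset (ℕ × ((Fin (t-1) → Option (ZMod n × Bool)) × ℕ)) :=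
    (Finset.Icc 1 t) ×ˢ ((Fintype.piFinset fun _ => O) ×ˢ Finset.range t) with hT
  set Bad : Finset (ZMod n) := S ∪ T.image F with hBad
  have hTcard : T.card ≤ t * ((2*S.card+1)^(t-1) * t) := by
    rw [hT, Finset.card_product, Finset.card_product]
    have h1 : (Finset.Icc 1 t).card = t := by rw [Nat.card_Icc]; omega
    have h2 : (Fintype.piFinset fun _ : Fin (t-1) => O).card ≤ (2*S.card+1)^(t-1) := by
      rw [Fintype.card_piFinset]
      calc (∏ _i : Fin (t-1), O.card) = O.card ^ (t-1) := by
            rw [Finset.prod_const, Finset.card_univ, Fintype.card_fin]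
        _ ≤ (2*S.card+1)^(t-1) := Nat.pow_le_pow_left hOcard _
    rw [h1, Finset.card_range]
    exact Nat.mul_le_mul_left _ (Nat.mul_le_mul_right _ h2)
  have hBadcard : Bad.card < n := by
    calc Bad.card ≤ S.card + (T.image F).card := Finset.card_union_le _ _
      _ ≤ S.card + T.card := Nat.add_le_add_left Finset.card_image_le _
      _ ≤ S.card + t * ((2*S.card+1)^(t-1)*t) := Nat.add_le_add_left hTcard _
      _ < n := hcard
  obtain ⟨x, hx⟩ : ∃ x, x ∉ Bad := by
    by_contra hcon
    push_neg at hcon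
    have hBu : Bad = Finset.univ := Finset.eq_univ_of_forall hcon
    rw [hBu, Finset.card_univ, ZMod.card] at hBadcard
    exact lt_irrefl _ hBadcard
  have hxS : x ∉ S := fun hmem => hx (Finset.mem_union_left _ hmem)
  refine ⟨x, hxS, ?_⟩
  have key : ∀ A B : Multiset (ZMod n),
      (∀ y ∈ A, y = x ∨ y ∈ S) → (∀ y ∈ B, y = x ∨ y ∈ S) →
      Multiset.card A + Multiset.card B ≤ t → A.sum = B.sum →
      B.count x ≤ A.count x → A = B := by
    intro A B hA hB hcardAB hsum hcount
    set a := A.count x with ha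
    set b := B.count x with hb
    set A' := A.filter (fun y => ¬ y = x) with hA'
    set B' := B.filter (fun y => ¬ y = x) with hB'
    have hAsplit : A.filter (fun y => y = x) + A' = A := Multiset.filter_add_not _ _
    have hBsplit : B.filter (fun y => y = x) + B' = B := Multiset.filter_add_not _ _
    have hfA : A.filter (fun y => y = x) = Multiset.replicate a x := Multiset.filter_eq' _ _
    have hfB : B.filter (fun y => y = x) = Multiset.replicate b x := Multiset.filter_eq' _ _
    have hA'S : ∀ y ∈ A', y ∈ S := by
      intro y hy
      rw [hA', Multiset.mem_filter] at hy
      rcases hA y hy.1 with h1 | h1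
      · exact absurd h1 hy.2
      · exact h1
    have hB'S : ∀ y ∈ B', y ∈ S := by
      intro y hy
      rw [hB', Multiset.mem_filter] at hy
      rcases hB y hy.1 with h1 | h1
      · exact absurd h1 hy.2
      · exact h1
    have hsumA : A.sum = a • x + A'.sum := by
      rw [← hAsplit, Multiset.sum_add, hfA, Multiset.sum_replicate]
    have hsumB : B.sum = b • x + B'.sum := by
      rw [← hBsplit, Multiset.sum_add, hfB, Multiset.sum_replicate]
    have hcardA : Multiset.card A = a + Multiset.card A' := by
      rw [← hAsplit, Multiset.card_add, hfA, Multiset.card_replicate]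
    have hcardB : Multiset.card B = b + Multiset.card B' := by
      rw [← hBsplit, Multiset.card_add, hfB, Multiset.card_replicate]
    have hsum2 : a • x + A'.sum = b • x + B'.sum := by rw [← hsumA, ← hsumB]; exact hsum
    rcases Nat.eq_or_lt_of_le hcount with heq | hlt
    · -- equal counts
      have hA'B' : A' = B' := by
        apply hS A' B'
        · exact fun y hy => Finset.mem_coe.mpr (hA'S y hy)
        · exact fun y hy => Finset.mem_coe.mpr (hB'S y hy)
        · omega
        · rw [heq] at hsum2
          exact add_left_cancel hsum2
      rw [← hAsplit, ← hBsplit, hfA, hfB, heq, hA'B']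
    · -- strict: produce a bad relation
      exfalso
      set c := a - b with hc
      have hc0 : 0 < c := by omega
      have habc : a = b + c := by omega
      have hcx : (c • x : ZMod n) = B'.sum - A'.sum := by
        rw [habc, add_nsmul, add_assoc] at hsum2
        exact eq_sub_of_add_eq (add_left_cancel hsum2)
      have haA : a ≤ Multiset.card A := Multiset.count_le_card _ _
      have hcards : Multiset.card A' + Multiset.card B' ≤ t - 1 := by omega
      have hct : c ≤ t := by omega
      obtain ⟨f, hmem, hv⟩ := encode (t-1) A' B' hcards
      obtain ⟨hqlt, hxeq⟩ := sol c hc0 x (B'.sum - A'.sum) hcx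
      apply hx
      refine Finset.mem_union_right _ ?_
      refine Finset.mem_image.mpr ⟨(c, f, c * x.val / n), ?_, ?_⟩
      · rw [hT]
        refine Finset.mem_product.mpr ⟨Finset.mem_Icc.mpr ⟨hc0, hct⟩,
          Finset.mem_product.mpr ⟨?_, Finset.mem_range.mpr (lt_of_lt_of_le hqlt hct)⟩⟩
        rw [Fintype.mem_piFinset]
        intro j
        show f j ∈ O
        cases hfj : f j with
        | none => exact Finset.mem_insert_self _ _
        | some p =>
          refine Finset.mem_insert_of_mem (Finset.mem_image.mpr ⟨p, ?_, rfl⟩)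
          refine Finset.mem_product.mpr ⟨?_, Finset.mem_univ _⟩
          rcases hmem j p hfj with h1 | h1
          · exact hA'S _ h1
          · exact hB'S _ h1
      · rw [hF]
        dsimp only
        rw [hv]
        exact hxeq
  intro A B hA hB hcard' hsum
  have hA2 : ∀ y ∈ A, y = x ∨ y ∈ S := by
    intro y hy
    have := hA y hy
    simpa using this
  have hB2 : ∀ y ∈ B, y = x ∨ y ∈ S := by
    intro y hy
    have := hB y hy
    simpa using this
  rcases le_total (B.count x) (A.count x) with hc | hc
  · exact key A B hA2 hB2 hcard' hsum hc
  · exact (key B A hB2 hA2 (by omega) hsum.symm hc).symm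

end TFreeAux

theorem t_free_exists (t m n : ℕ) (ht : 0 < t) (hm : 0 < m) (hn : 0 < n)
    (h : t * 3 ^ t * m ^ t ≤ n) :
    ∃ S : Finset (ZMod n), IsTFreeSet t (↑S : Set (ZMod n)) ∧ S.card = m := by
  haveI : NeZero n := ⟨hn.ne'⟩
  have main : ∀ s, s ≤ m →
      ∃ S : Finset (ZMod n), IsTFreeSet t (↑S : Set (ZMod n)) ∧ S.card = s := by
    intro s
    induction s with
    | zero =>
      intro _
      refine ⟨∅, ?_, rfl⟩
      intro A B hA hB _ _
      have hA0 : A = 0 := Multiset.eq_zero_of_forall_notMem fun y hy => by simpa using hA y hy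
      have hB0 : B = 0 := Multiset.eq_zero_of_forall_notMem fun y hy => by simpa using hB y hy
      rw [hA0, hB0]
    | succ s ih =>
      intro hsm
      obtain ⟨S, hfree, hcardS⟩ := ih (by omega)
      have harith : S.card + t * ((2 * S.card + 1) ^ (t - 1) * t) < n := by
        rw [hcardS]
        exact TFreeAux.arith t m s n ht hm (by omega) h
      obtain ⟨x, hxS, hfree'⟩ := TFreeAux.step ht S hfree harith
      exact ⟨insert x S, hfree', by rw [Finset.card_insert_of_notMem hxS, hcardS]⟩
  exact main m le_rfl
end

section
/- Let t, m, n be positive integers such that Z_n contains a t-free set of size m. Then n ≥ C(m + ⌊t/2⌋, ⌊t/2⌋), the binomial coefficient. -/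
lemma choose_sum_key (m h : ℕ) (hm : 0 < m) :
    ∑ k ∈ Finset.range (h + 1), (m + k - 1).choose k = (m + h).choose h := by
  have h1 : ∀ k, (m + k - 1).choose k = (m - 1 + k).choose (m - 1) := by
    intro k
    have : m + k - 1 = m - 1 + k := by omega
    rw [this, ← Nat.choose_symm (Nat.le_add_right _ _)]
    congr 1
    omega
  simp only [h1]
  rw [show ∑ k ∈ Finset.range (h + 1), (m - 1 + k).choose (m - 1)
      = ∑ i ∈ Finset.Icc (m - 1) (m - 1 + h), i.choose (m - 1) by
    rw [← Finset.Ico_add_one_right_eq_Icc, Finset.sum_Ico_eq_sum_range]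
    have : m - 1 + h + 1 - (m - 1) = h + 1 := by omega
    rw [this]]
  rw [Nat.sum_Icc_choose]
  have e1 : m - 1 + h + 1 = m + h := by omega
  have e2 : m - 1 + 1 = m := by omega
  rw [e1, e2, ← Nat.choose_symm (Nat.le_add_right m h)]
  congr 1
  omega

theorem t_free_size_bound (t m n : ℕ) (ht : 0 < t) (hm : 0 < m) (hn : 0 < n)
    (S : Finset (ZMod n)) (hS : IsTFreeSet t (↑S : Set (ZMod n))) (hcard : S.card = m) :
    (m + t / 2).choose (t / 2) ≤ n := by
  haveI : NeZero n := ⟨hn.ne'⟩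
  set h := t / 2 with hh
  have h2 : 2 * h ≤ t := by have := Nat.mul_div_le t 2; omega
  -- the injection
  let f : (Σ k : Fin (h + 1), Sym (↥S) k) → ZMod n :=
    fun x => ((x.2 : Multiset ↥S).map Subtype.val).sum
  have hf : Function.Injective f := by
    rintro ⟨k, a⟩ ⟨l, b⟩ hab
    set A : Multiset (ZMod n) := (a : Multiset ↥S).map Subtype.val with hA
    set B : Multiset (ZMod n) := (b : Multiset ↥S).map Subtype.val with hB
    have hAS : ∀ x ∈ A, x ∈ (↑S : Set (ZMod n)) := by
      intro x hx
      obtain ⟨y, _, rfl⟩ := Multiset.mem_map.1 hx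
      exact y.2
    have hBS : ∀ x ∈ B, x ∈ (↑S : Set (ZMod n)) := by
      intro x hx
      obtain ⟨y, _, rfl⟩ := Multiset.mem_map.1 hx
      exact y.2
    have hcA : Multiset.card A = (k : ℕ) := by simp [hA]
    have hcB : Multiset.card B = (l : ℕ) := by simp [hB]
    have hle : Multiset.card A + Multiset.card B ≤ t := by
      rw [hcA, hcB]
      have := k.2
      have := l.2
      omega
    have hABeq : A = B := hS A B hAS hBS hle hab
    have hkl : (k : ℕ) = (l : ℕ) := by rw [← hcA, ← hcB, hABeq]
    have hkl' : k = l := Fin.ext hkl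
    subst hkl'
    have hab2 : (a : Multiset ↥S) = (b : Multiset ↥S) :=
      Multiset.map_injective Subtype.val_injective hABeq
    congr 1
    exact Sym.coe_injective hab2
  have hcard2 : Fintype.card (Σ k : Fin (h + 1), Sym (↥S) k) ≤ Fintype.card (ZMod n) :=
    Fintype.card_le_of_injective f hf
  rw [ZMod.card n] at hcard2
  have hmS : Fintype.card ↥S = m := by rw [Fintype.card_coe, hcard]
  have : Fintype.card (Σ k : Fin (h + 1), Sym (↥S) k) = (m + h).choose h := by
    rw [Fintype.card_sigma]
    have : ∀ k : Fin (h + 1), Fintype.card (Sym (↥S) k) = (m + (k : ℕ) - 1).choose k := by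
      intro k
      rw [Sym.card_sym_eq_choose, hmS]
    simp only [this]
    rw [Fin.sum_univ_eq_sum_range (fun k => (m + k - 1).choose k)]
    exact choose_sum_key m h hm
  omega
end

section
/- Let S be a t-free set of size m in Z_n, and let Σ S denote the set of all sums of k elements of S for 1 ≤ k ≤ ⌊t/2⌋. Then all such sums arising from distinct multisets are distinct and non-zero in Z_n, so |Σ S| = C(m + ⌊t/2⌋, ⌊t/2⌋) − 1 and hence n − 1 ≥ C(m + ⌊t/2⌋, ⌊t/2⌋) − 1. -/
open Finset

namespace Finset

variable {α : Type*} [DecidableEq α]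

theorem card_sym (s : Finset α) (k : ℕ) : #(s.sym k) = (#s).multichoose k := by
  conv_lhs => rw [← attach_map_val (s := s), sym_map, card_map, ← univ_eq_attach, sym_univ]
  rw [card_univ, Sym.card_sym_eq_multichoose, Fintype.card_coe]

def multisetsCardLE (s : Finset α) (r : ℕ) : Finset (Multiset α) :=
  (range (r + 1)).biUnion fun k => (s.sym k).image Sym.toMultiset

theorem mem_multisetsCardLE {s : Finset α} {r : ℕ} {A : Multiset α} :
    A ∈ s.multisetsCardLE r ↔ (∀ a ∈ A, a ∈ s) ∧ Multiset.card A ≤ r := by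
  simp only [multisetsCardLE, mem_biUnion, mem_range, mem_image, mem_sym_iff, Nat.lt_succ_iff]
  constructor
  · rintro ⟨k, hk, B, hB, rfl⟩
    exact ⟨hB, B.2.trans_le hk⟩
  · rintro ⟨hA, hr⟩
    exact ⟨_, hr, ⟨A, rfl⟩, hA, rfl⟩

theorem card_multisetsCardLE (s : Finset α) (r : ℕ) :
    #(s.multisetsCardLE r) = (#s + r).choose r := by
  have hdisj : (range (r + 1) : Set ℕ).PairwiseDisjoint
      fun k => (s.sym k).image Sym.toMultiset := by
    intro k _ l _ hkl
    simp only [Function.onFun, disjoint_left, mem_image]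
    rintro _ ⟨A, -, rfl⟩ ⟨B, -, hBA⟩
    exact hkl (A.2.symm.trans ((congrArg _ hBA).symm.trans B.2))
  rw [multisetsCardLE, card_biUnion hdisj, ← Nat.choose_symm_add, add_comm #s r,
    ← Nat.sum_range_multichoose]
  refine sum_congr rfl fun k _ => ?_
  rw [card_image_of_injective _ Sym.coe_injective, card_sym]

end Finset

namespace IsTFreeSet

variable {G : Type*} [AddCommGroup G] {t : ℕ} {S : Set G}

theorem eq_of_sum_eq (hS : IsTFreeSet t S) {A B : Multiset G} (hA : ∀ x ∈ A, x ∈ S)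
    (hB : ∀ x ∈ B, x ∈ S) (hAt : Multiset.card A ≤ t / 2) (hBt : Multiset.card B ≤ t / 2)
    (h : A.sum = B.sum) : A = B :=
  hS A B hA hB (by omega) h

theorem sum_ne_zero (hS : IsTFreeSet t S) {A : Multiset G} (hA : ∀ x ∈ A, x ∈ S)
    (hA₀ : A ≠ 0) (hAt : Multiset.card A ≤ t) : A.sum ≠ 0 := fun h =>
  hA₀ (hS A 0 hA (by simp) (by simpa using hAt) (by simpa using h))

end IsTFreeSet

namespace Finset

variable {G : Type*} [AddCommMonoid G] [DecidableEq G]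

/-- The paper's `Σ S` (there `r = ⌊t/2⌋`): sums of between `1` and `r` elements of `S`,
with repetition. -/
def boundedSums (S : Finset G) (r : ℕ) : Finset G :=
  ((S.multisetsCardLE r).erase 0).image Multiset.sum

theorem mem_boundedSums {S : Finset G} {r : ℕ} {x : G} :
    x ∈ S.boundedSums r ↔ ∃ A : Multiset G, (∀ a ∈ A, a ∈ S) ∧
      1 ≤ Multiset.card A ∧ Multiset.card A ≤ r ∧ x = A.sum := by
  simp only [boundedSums, mem_image, mem_erase, mem_multisetsCardLE, Nat.one_le_iff_ne_zero,
    Ne, Multiset.card_eq_zero]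
  constructor
  · rintro ⟨A, ⟨hA₀, hA, hAr⟩, rfl⟩
    exact ⟨A, hA, hA₀, hAr, rfl⟩
  · rintro ⟨A, hA, hA₀, hAr, rfl⟩
    exact ⟨A, ⟨hA₀, hA, hAr⟩, rfl⟩

end Finset

namespace IsTFreeSet

variable {G : Type*} [AddCommGroup G] [DecidableEq G] {t : ℕ} {S : Finset G}

theorem card_boundedSums (hS : IsTFreeSet t (S : Set G)) :
    #(S.boundedSums (t / 2)) = (#S + t / 2).choose (t / 2) - 1 := by
  have hinj : Set.InjOn Multiset.sum
      ((S.multisetsCardLE (t / 2)).erase 0 : Set (Multiset G)) := by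
    intro A hA B hB h
    simp only [coe_erase, Set.mem_sdiff, mem_coe, mem_multisetsCardLE] at hA hB
    exact hS.eq_of_sum_eq hA.1.1 hB.1.1 hA.1.2 hB.1.2 h
  have hzero : (0 : Multiset G) ∈ S.multisetsCardLE (t / 2) := by simp [mem_multisetsCardLE]
  rw [boundedSums, card_image_of_injOn hinj, card_erase_of_mem hzero, card_multisetsCardLE]

theorem zero_notMem_boundedSums (hS : IsTFreeSet t (S : Set G)) :
    (0 : G) ∉ S.boundedSums (t / 2) := by
  rw [mem_boundedSums]
  rintro ⟨A, hA, hA₁, hAt, h⟩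
  exact hS.sum_ne_zero hA (Multiset.card_pos.mp hA₁) (by omega) h.symm

end IsTFreeSet

theorem t_free_sumset_general (t m n : ℕ) (hn : 0 < n)
    (S : Finset (ZMod n)) (hS : IsTFreeSet t (↑S : Set (ZMod n))) (hcard : S.card = m) :
    (∀ A B : Multiset (ZMod n), (∀ x ∈ A, x ∈ S) → (∀ x ∈ B, x ∈ S) →
        1 ≤ Multiset.card A → Multiset.card A ≤ t / 2 →
        1 ≤ Multiset.card B → Multiset.card B ≤ t / 2 →
        A.sum = B.sum → A = B) ∧
    (∀ A : Multiset (ZMod n), (∀ x ∈ A, x ∈ S) →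
        1 ≤ Multiset.card A → Multiset.card A ≤ t / 2 → A.sum ≠ 0) ∧
    Set.ncard {x : ZMod n | ∃ A : Multiset (ZMod n), (∀ a ∈ A, a ∈ S) ∧
        1 ≤ Multiset.card A ∧ Multiset.card A ≤ t / 2 ∧ x = A.sum}
      = (m + t / 2).choose (t / 2) - 1 ∧
    (m + t / 2).choose (t / 2) - 1 ≤ n - 1 := by
  have : NeZero n := ⟨hn.ne'⟩
  have hsums : {x : ZMod n | ∃ A : Multiset (ZMod n), (∀ a ∈ A, a ∈ S) ∧
      1 ≤ Multiset.card A ∧ Multiset.card A ≤ t / 2 ∧ x = A.sum} = S.boundedSums (t / 2) :=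
    Set.ext fun _ => mem_boundedSums.symm
  have hlt : #(S.boundedSums (t / 2)) < n := by
    simpa using card_lt_univ_of_notMem hS.zero_notMem_boundedSums
  rw [hS.card_boundedSums, hcard] at hlt
  refine ⟨fun A B hA hB _ hAt _ hBt => hS.eq_of_sum_eq hA hB hAt hBt,
    fun A hA hA₁ hAt => hS.sum_ne_zero hA (Multiset.card_pos.mp hA₁) (by omega), ?_, by omega⟩
  rw [hsums, Set.ncard_coe_finset, hS.card_boundedSums, hcard]

theorem t_free_sumset (t m n : ℕ) (ht : 0 < t) (hn : 0 < n)
    (S : Finset (ZMod n)) (hS : IsTFreeSet t (↑S : Set (ZMod n))) (hcard : S.card = m) :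
    (∀ A B : Multiset (ZMod n), (∀ x ∈ A, x ∈ S) → (∀ x ∈ B, x ∈ S) →
        1 ≤ Multiset.card A → Multiset.card A ≤ t / 2 →
        1 ≤ Multiset.card B → Multiset.card B ≤ t / 2 →
        A.sum = B.sum → A = B) ∧
    (∀ A : Multiset (ZMod n), (∀ x ∈ A, x ∈ S) →
        1 ≤ Multiset.card A → Multiset.card A ≤ t / 2 → A.sum ≠ 0) ∧
    Set.ncard {x : ZMod n | ∃ A : Multiset (ZMod n), (∀ a ∈ A, a ∈ S) ∧
        1 ≤ Multiset.card A ∧ Multiset.card A ≤ t / 2 ∧ x = A.sum}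
      = (m + t / 2).choose (t / 2) - 1 ∧
    (m + t / 2).choose (t / 2) - 1 ≤ n - 1 :=
  t_free_sumset_general t m n hn S hS hcard
end
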